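/- Let (X_I)_{I∈D} and (Y_J)_{J∈D} be families of finite collections of dyadic intervals, each satisfying Jones' compatibility condition (J1)–(J4) with constant κ ≥ 1. Define B_{I×J} = {K×L : K ∈ X_I, L ∈ Y_J}. Then the family (B_R)_{R∈D⊗D} satisfies Capon's local product condition (P1)–(P4) with constants C_X = C_Y = κ; in particular, for all dyadic I, J the rectangles in B_{I×J} are pairwise disjoint, κ^{−1}|I| ≤ |⋃X_I| ≤ κ|I| and κ^{−1}|J| ≤ |⋃Y_J| ≤ κ|J|, and for I_0 ⊂ I, K ∈ X_I one has |K ∩ ⋃X_{I_0}|/|K| ≥ κ^{−1}|⋃X_{I_0}|/|⋃X_I| (and similarly in the Y-variable). -/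

import Mathlib

open MeasureTheory

/-- A dyadic interval `[k/2^n, (k+1)/2^n) ⊆ [0,1)`. -/
structure DyadicIvl where
  n : ℕ
  k : ℕ
  hk : k < 2 ^ n

instance : DecidableEq DyadicIvl := by
  have h : Function.Injective (fun I : DyadicIvl => (I.n, I.k)) := by
    rintro ⟨n, k, hk⟩ ⟨n', k', hk'⟩ e
    simp only [Prod.mk.injEq] at e
    obtain ⟨rfl, rfl⟩ := e
    rfl
  exact h.decidableEq

namespace DyadicIvl

/-- The underlying set of a dyadic interval. -/
noncomputable def set (I : DyadicIvl) : Set ℝ :=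
  Set.Ico ((I.k : ℝ) / 2 ^ I.n) (((I.k : ℝ) + 1) / 2 ^ I.n)

/-- The length `2^{-n}` of a dyadic interval. -/
noncomputable def len (I : DyadicIvl) : ℝ := (2 : ℝ)⁻¹ ^ I.n

/-- Left half `I⁺`. -/
def left (I : DyadicIvl) : DyadicIvl := ⟨I.n + 1, 2 * I.k, by have := I.hk; rw [pow_succ]; omega⟩

/-- Right half `I⁻`. -/
def right (I : DyadicIvl) : DyadicIvl := ⟨I.n + 1, 2 * I.k + 1, by have := I.hk; rw [pow_succ]; omega⟩

end DyadicIvl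

/-- The `L∞`-normalized Haar function `h_I = χ_{I⁺} - χ_{I⁻}`. -/
noncomputable def haar (I : DyadicIvl) : ℝ → ℝ := fun x =>
  I.left.set.indicator (fun _ => (1 : ℝ)) x - I.right.set.indicator (fun _ => (1 : ℝ)) x

/-- Union of the intervals of a finite collection. -/
noncomputable def uset (Z : Finset DyadicIvl) : Set ℝ := ⋃ K ∈ Z, K.set

/-- Lebesgue measure of a set, as a real number. -/
noncomputable def msr (s : Set ℝ) : ℝ := (volume s).toReal

/-- The bi-parameter Hardy space square-function norm of `∑_{R ∈ S} a_R h_R`. -/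
noncomputable def hNorm (p q : ℝ) (S : Finset (DyadicIvl × DyadicIvl)) (a : DyadicIvl × DyadicIvl → ℝ) : ℝ :=
  (∫ x in Set.Ico (0:ℝ) 1,
    (∫ y in Set.Ico (0:ℝ) 1,
      (∑ R ∈ S, (a R) ^ 2 * (haar R.1 x) ^ 2 * (haar R.2 y) ^ 2) ^ (q / 2)) ^ (p / q)) ^ (1 / p)

/-- The `L²([0,1)²)` pairing of two functions of two variables. -/
noncomputable def pairFn (f g : ℝ → ℝ → ℝ) : ℝ :=
  ∫ x in Set.Ico (0:ℝ) 1, ∫ y in Set.Ico (0:ℝ) 1, f x y * g x y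

/-- The function `∑_{R ∈ S} a_R h_R` (bi-parameter Haar expansion). -/
noncomputable def fnOf (S : Finset (DyadicIvl × DyadicIvl)) (a : DyadicIvl × DyadicIvl → ℝ) : ℝ → ℝ → ℝ :=
  fun x y => ∑ R ∈ S, a R * haar R.1 x * haar R.2 y

/-- The tensor Haar function `h_{K×L}`. -/
noncomputable def haarR (R : DyadicIvl × DyadicIvl) : ℝ → ℝ → ℝ := fun x y => haar R.1 x * haar R.2 y

/-- The dual norm of `(H^p(H^q))^*`. -/
noncomputable def dualNorm (p q : ℝ) (f : ℝ → ℝ → ℝ) : ℝ :=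
  sSup {r : ℝ | ∃ S a, hNorm p q S a ≤ 1 ∧ r = pairFn f (fnOf S a)}

/-- The dyadic intervals of level exactly `m`. -/
def dyAt (m : ℕ) : Finset DyadicIvl :=
  (Finset.range (2 ^ m)).attach.image fun k => ⟨m, k.1, Finset.mem_range.mp k.2⟩

/-- The dyadic intervals of level at most `N` (i.e. measure at least `2^{-N}`). -/
def dyLE (N : ℕ) : Finset DyadicIvl := (Finset.range (N + 1)).biUnion dyAt

/-- The Haar coefficient of `f` at the dyadic rectangle `R`. -/
noncomputable def coeff (f : ℝ → ℝ → ℝ) (R : DyadicIvl × DyadicIvl) : ℝ :=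
  (∫ x in Set.Ico (0:ℝ) 1, ∫ y in Set.Ico (0:ℝ) 1, f x y * haar R.1 x * haar R.2 y) /
    (R.1.len * R.2.len)

/-- The `H_N^p(H_N^q)` norm of a function (via its Haar coefficients). -/
noncomputable def hardyNorm (p q : ℝ) (N : ℕ) (f : ℝ → ℝ → ℝ) : ℝ :=
  hNorm p q (dyLE N ×ˢ dyLE N) (coeff f)

/-- The randomized block `b_{I×J}^{(θ,ε)} = ∑_{K ∈ X_I, L ∈ Y_J} θ_K ε_L h_{K×L}`. -/
noncomputable def bB (X Y : DyadicIvl → Finset DyadicIvl) (θ ε : DyadicIvl → ℝ) (I J : DyadicIvl) :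
    ℝ → ℝ → ℝ := fun x y => ∑ K ∈ X I, ∑ L ∈ Y J, θ K * ε L * haar K x * haar L y

/-- Jones' condition (J1): each collection consists of pairwise disjoint dyadic intervals,
and collections for distinct indices are disjoint. -/
def J1cond (X : DyadicIvl → Finset DyadicIvl) : Prop :=
  (∀ I, (↑(X I) : Set DyadicIvl).Pairwise fun K K' => Disjoint K.set K'.set) ∧
    ∀ I I', I ≠ I' → Disjoint (X I) (X I')

/-- Jones' compatibility condition (J1)–(J4) with constant `κ`. -/
def Jones (κ : ℝ) (Z : DyadicIvl → Finset DyadicIvl) : Prop :=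
  J1cond Z ∧
  (∀ I : DyadicIvl, uset (Z I.left) ∪ uset (Z I.right) ⊆ uset (Z I) ∧
      Disjoint (uset (Z I.left)) (uset (Z I.right))) ∧
  (∀ I : DyadicIvl, κ⁻¹ * I.len ≤ msr (uset (Z I)) ∧ msr (uset (Z I)) ≤ κ * I.len) ∧
  (∀ I0 I : DyadicIvl, I0.set ⊆ I.set → ∀ K ∈ Z I,
      κ⁻¹ * (msr (uset (Z I0)) / msr (uset (Z I))) ≤ msr (K.set ∩ uset (Z I0)) / K.len)

/-- tensor products of collections satisfying Jones' condition (J1)–(J4) with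
constant `κ` satisfy Capon's local product condition (P1)–(P4) with constants `C_X = C_Y = κ`. -/
theorem jones_tensor_capon (κ : ℝ) (hκ : 1 ≤ κ) (X Y : DyadicIvl → Finset DyadicIvl)
    (hX : Jones κ X) (hY : Jones κ Y) :
    (∀ I J : DyadicIvl, (↑(X I ×ˢ Y J) : Set (DyadicIvl × DyadicIvl)).Pairwise
        fun R R' => Disjoint (R.1.set ×ˢ R.2.set) (R'.1.set ×ˢ R'.2.set)) ∧
    (∀ I J I' J' : DyadicIvl, (I, J) ≠ (I', J') → Disjoint (X I ×ˢ Y J) (X I' ×ˢ Y J')) ∧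
    (∀ I : DyadicIvl, κ⁻¹ * I.len ≤ msr (uset (X I)) ∧ msr (uset (X I)) ≤ κ * I.len) ∧
    (∀ J : DyadicIvl, κ⁻¹ * J.len ≤ msr (uset (Y J)) ∧ msr (uset (Y J)) ≤ κ * J.len) ∧
    (∀ I0 I : DyadicIvl, I0.set ⊆ I.set → ∀ K ∈ X I,
        κ⁻¹ * (msr (uset (X I0)) / msr (uset (X I))) ≤ msr (K.set ∩ uset (X I0)) / K.len) ∧
    (∀ J0 J : DyadicIvl, J0.set ⊆ J.set → ∀ L ∈ Y J,
        κ⁻¹ * (msr (uset (Y J0)) / msr (uset (Y J))) ≤ msr (L.set ∩ uset (Y J0)) / L.len) := by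
  obtain ⟨⟨hX1, hX1'⟩, _, hX3, hX4⟩ := hX
  obtain ⟨⟨hY1, hY1'⟩, _, hY3, hY4⟩ := hY
  refine ⟨?_, ?_, hX3, hY3, hX4, hY4⟩
  · intro I J R hR R' hR' hne
    simp only [Finset.coe_product, Set.mem_prod, Finset.mem_coe] at hR hR'
    by_cases h1 : R.1 = R'.1
    · have h2 : R.2 ≠ R'.2 := fun h2 => hne (Prod.ext h1 h2)
      exact Set.disjoint_prod.mpr (Or.inr (hY1 J hR.2 hR'.2 h2))
    · exact Set.disjoint_prod.mpr (Or.inl (hX1 I hR.1 hR'.1 h1))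
  · intro I J I' J' hne
    by_cases hI : I = I'
    · subst hI
      have hJ : J ≠ J' := fun h => hne (by rw [h])
      exact Finset.disjoint_product.mpr (Or.inr (hY1' J J' hJ))
    · exact Finset.disjoint_product.mpr (Or.inl (hX1' I I' hI))
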